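/- arXiv:2403.19127 — 3 statements merged into one kernel-verified Lean document; each statement's English description precedes it below -/
import Mathlib

section
/- A tuple of precoders w = (w_{ip}) is feasible for Problem (P) if and only if there exist nonnegative bounds (τ, ε) such that (w, τ, ε) is feasible for Problem (R); in particular, for every feasible point (w, τ, ε) of Problem (R) the precoder tuple w is itself feasible for Problem (P). Consequently, the infimum of the total transmit power Σ_{p∈𝒯} Σ_{i∈𝒰_p} ‖w_{ip}‖² over the feasible set of Problem (P) equals the infimum of the same objective over the feasible set of Problem (R). -/
open scoped ComplexInnerProductSpace

/-!
Only the channel gains `g i q j = ‖⟪h i q, w q j⟫‖²` matter, and they are nonnegative. Since the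
SINR denominator is positive, `γ ≤ Γ` is the linear constraint (R1) with `τ`, `ε` equal to the
actual interference and leakage, which then satisfy (R2), (R3) with equality. Conversely (R2),
(R3) bound the actual interference by `τ`, `ε`, so for `γ ≥ 0` (R1) implies `γ ≤ Γ`. Hence both
problems have the same precoder projections of their feasible sets, and so the same infimum.
-/

open Finset

section Relaxation

variable {T U : Type*} [Fintype T] [DecidableEq T] [DecidableEq U]
  (Up : T → Finset U) (Ti : U → Finset T) {g : U → T → U → ℝ}

theorem sinr_denominator_pos (hg : ∀ i q j, 0 ≤ g i q j) {σ2 : ℝ} (hσ : 0 < σ2) (i : U) :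
    0 < ∑ q ∈ Ti i, ∑ j ∈ (Up q).erase i, g i q j
      + ∑ q ∈ (Ti i)ᶜ, ∑ j ∈ Up q, g i q j + σ2 := by
  have hserved := sum_nonneg fun q (_ : q ∈ Ti i) =>
    sum_nonneg fun j (_ : j ∈ (Up q).erase i) => hg i q j
  have hleak := sum_nonneg fun q (_ : q ∈ (Ti i)ᶜ) =>
    sum_nonneg fun j (_ : j ∈ Up q) => hg i q j
  linarith

theorem le_sinr_iff (hg : ∀ i q j, 0 ≤ g i q j) {σ2 : ℝ} (hσ : 0 < σ2) {i : U} {p : T}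
    (hp : p ∈ Ti i) (γ S : ℝ) :
    γ ≤ S / (∑ q ∈ Ti i, ∑ j ∈ (Up q).erase i, g i q j
      + ∑ q ∈ (Ti i)ᶜ, ∑ j ∈ Up q, g i q j + σ2) ↔
    γ * (∑ j ∈ (Up p).erase i, g i p j + ∑ q ∈ (Ti i).erase p, ∑ j ∈ (Up q).erase i, g i q j
      + ∑ q ∈ (Ti i)ᶜ, ∑ j ∈ Up q, g i q j + σ2) ≤ S := by
  rw [le_div_iff₀ (sinr_denominator_pos Up Ti hg hσ i), ← add_sum_erase _ _ hp]

theorem le_sinr_of_relaxed (hg : ∀ i q j, 0 ≤ g i q j) {σ2 : ℝ} (hσ : 0 < σ2) {i : U} {p : T}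
    (hp : p ∈ Ti i) {γ S : ℝ} (hγ : 0 ≤ γ) {τ ε : T → ℝ}
    (hτ : ∀ q ∈ Ti i, ∑ j ∈ (Up q).erase i, g i q j ≤ τ q)
    (hε : ∀ q ∉ Ti i, ∑ j ∈ Up q, g i q j ≤ ε q)
    (hR : γ * (∑ j ∈ (Up p).erase i, g i p j + ∑ q ∈ (Ti i).erase p, τ q
      + ∑ q ∈ (Ti i)ᶜ, ε q + σ2) ≤ S) :
    γ ≤ S / (∑ q ∈ Ti i, ∑ j ∈ (Up q).erase i, g i q j
      + ∑ q ∈ (Ti i)ᶜ, ∑ j ∈ Up q, g i q j + σ2) := by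
  refine (le_sinr_iff Up Ti hg hσ hp γ S).2 (le_trans ?_ hR)
  gcongr with q hq q hq
  · exact hτ q (mem_of_mem_erase hq)
  · exact hε q (mem_compl.1 hq)

end Relaxation

theorem stmt0_general
    {T U : Type*} [Fintype T] [DecidableEq T] [DecidableEq U]
    (Up : T → Finset U)
    (N : ℕ)
    (h : U → T → EuclideanSpace ℂ (Fin N))
    (γ : U → T → ℝ) (hγ : ∀ p : T, ∀ i ∈ Up p, 0 < γ i p)
    (σ2 : ℝ) (hσ : 0 < σ2)
    -- `Ti i` is the (nonempty) set of BSs serving user `i`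
    (Ti : U → Finset T) (hTi : ∀ i p, p ∈ Ti i ↔ i ∈ Up p)
    -- the per-BS SINR `Γ_{ip}(w)`
    (Γ : U → T → (T → U → EuclideanSpace ℂ (Fin N)) → ℝ)
    (hΓ : ∀ i p w, Γ i p w =
      ‖⟪h i p, w p i⟫‖ ^ 2 /
        (∑ q ∈ Ti i, ∑ j ∈ (Up q).erase i, ‖⟪h i q, w q j⟫‖ ^ 2
          + ∑ q ∈ (Ti i)ᶜ, ∑ j ∈ Up q, ‖⟪h i q, w q j⟫‖ ^ 2 + σ2))
    -- feasibility for Problem (P)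
    (FeasP : (T → U → EuclideanSpace ℂ (Fin N)) → Prop)
    (hFeasP : ∀ w, FeasP w ↔ ∀ p : T, ∀ i ∈ Up p, γ i p ≤ Γ i p w)
    -- feasibility for Problem (R)
    (FeasR : (T → U → EuclideanSpace ℂ (Fin N)) → (U → T → ℝ) → (U → T → ℝ) → Prop)
    (hFeasR : ∀ w τ ε, FeasR w τ ε ↔
      ((∀ q : T, ∀ i ∈ Up q, 0 ≤ τ i q) ∧
       (∀ q : T, ∀ i ∉ Up q, 0 ≤ ε i q) ∧
       -- (R1)
       (∀ p : T, ∀ i ∈ Up p,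
          γ i p * (∑ j ∈ (Up p).erase i, ‖⟪h i p, w p j⟫‖ ^ 2
              + ∑ q ∈ (Ti i).erase p, τ i q
              + ∑ q ∈ (Ti i)ᶜ, ε i q + σ2)
            ≤ ‖⟪h i p, w p i⟫‖ ^ 2) ∧
       -- (R2)
       (∀ q : T, ∀ i ∈ Up q,
          ∑ j ∈ (Up q).erase i, ‖⟪h i q, w q j⟫‖ ^ 2 ≤ τ i q) ∧
       -- (R3)
       (∀ q : T, ∀ i ∉ Up q,
          ∑ j ∈ Up q, ‖⟪h i q, w q j⟫‖ ^ 2 ≤ ε i q)))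
    -- the total transmit power
    (obj : (T → U → EuclideanSpace ℂ (Fin N)) → ℝ) :
    (∀ w, (FeasP w ↔ ∃ τ ε, FeasR w τ ε) ∧ ∀ τ ε, FeasR w τ ε → FeasP w) ∧
    sInf {x : ℝ | ∃ w, FeasP w ∧ obj w = x}
      = sInf {x : ℝ | ∃ w τ ε, FeasR w τ ε ∧ obj w = x} := by
  have hg (w : T → U → EuclideanSpace ℂ (Fin N)) :
      ∀ i q j, 0 ≤ ‖⟪h i q, w q j⟫‖ ^ 2 := fun _ _ _ => by positivity
  have toP : ∀ w τ ε, FeasR w τ ε → FeasP w := by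
    intro w τ ε hR
    obtain ⟨-, -, hR1, hR2, hR3⟩ := (hFeasR w τ ε).1 hR
    refine (hFeasP w).2 fun p i hip => (hΓ i p w).symm ▸ ?_
    exact le_sinr_of_relaxed Up Ti (hg w) hσ ((hTi i p).2 hip) (hγ p i hip).le
      (fun q hq => hR2 q i ((hTi i q).1 hq)) (fun q hq => hR3 q i (mt (hTi i q).2 hq))
      (hR1 p i hip)
  have toR : ∀ w, FeasP w → ∃ τ ε, FeasR w τ ε := by
    intro w hP
    refine ⟨fun i q => ∑ j ∈ (Up q).erase i, ‖⟪h i q, w q j⟫‖ ^ 2,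
      fun i q => ∑ j ∈ Up q, ‖⟪h i q, w q j⟫‖ ^ 2, (hFeasR _ _ _).2
      ⟨fun q i _ => sum_nonneg fun j _ => hg w i q j, fun q i _ => sum_nonneg fun j _ => hg w i q j,
        fun p i hip => ?_, fun _ _ _ => le_rfl, fun _ _ _ => le_rfl⟩⟩
    have hΓip := (hΓ i p w) ▸ (hFeasP w).1 hP p i hip
    exact (le_sinr_iff Up Ti (hg w) hσ ((hTi i p).2 hip) _ _).1 hΓip
  have feas_iff w : FeasP w ↔ ∃ τ ε, FeasR w τ ε :=
    ⟨toR w, fun ⟨τ, ε, hR⟩ => toP w τ ε hR⟩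
  refine ⟨fun w => ⟨feas_iff w, toP w⟩, ?_⟩
  simp only [feas_iff, exists_and_right]

/-- Equivalence of Problem (P) and its relaxation (R):
a precoder tuple `w` is feasible for (P) iff there are nonnegative bounds `(τ, ε)`
making `(w, τ, ε)` feasible for (R); in particular feasibility of `(w, τ, ε)` for (R)
implies feasibility of `w` for (P).  Consequently the infimum of the total transmit
power over the feasible set of (P) equals that over the feasible set of (R). -/
theorem stmt0
    {T U : Type*} [Fintype T] [Fintype U] [DecidableEq T] [DecidableEq U]
    (Up : T → Finset U)
    (hserve : ∀ i : U, ∃ p : T, i ∈ Up p)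
    (N : ℕ) (hN : 1 ≤ N)
    (h : U → T → EuclideanSpace ℂ (Fin N))
    (γ : U → T → ℝ) (hγ : ∀ p : T, ∀ i ∈ Up p, 0 < γ i p)
    (σ2 : ℝ) (hσ : 0 < σ2)
    -- `Ti i` is the (nonempty) set of BSs serving user `i`
    (Ti : U → Finset T) (hTi : ∀ i p, p ∈ Ti i ↔ i ∈ Up p)
    -- the per-BS SINR `Γ_{ip}(w)`
    (Γ : U → T → (T → U → EuclideanSpace ℂ (Fin N)) → ℝ)
    (hΓ : ∀ i p w, Γ i p w =
      ‖⟪h i p, w p i⟫‖ ^ 2 /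
        (∑ q ∈ Ti i, ∑ j ∈ (Up q).erase i, ‖⟪h i q, w q j⟫‖ ^ 2
          + ∑ q ∈ (Ti i)ᶜ, ∑ j ∈ Up q, ‖⟪h i q, w q j⟫‖ ^ 2 + σ2))
    -- feasibility for Problem (P)
    (FeasP : (T → U → EuclideanSpace ℂ (Fin N)) → Prop)
    (hFeasP : ∀ w, FeasP w ↔ ∀ p : T, ∀ i ∈ Up p, γ i p ≤ Γ i p w)
    -- feasibility for Problem (R)
    (FeasR : (T → U → EuclideanSpace ℂ (Fin N)) → (U → T → ℝ) → (U → T → ℝ) → Prop)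
    (hFeasR : ∀ w τ ε, FeasR w τ ε ↔
      ((∀ q : T, ∀ i ∈ Up q, 0 ≤ τ i q) ∧
       (∀ q : T, ∀ i ∉ Up q, 0 ≤ ε i q) ∧
       -- (R1)
       (∀ p : T, ∀ i ∈ Up p,
          γ i p * (∑ j ∈ (Up p).erase i, ‖⟪h i p, w p j⟫‖ ^ 2
              + ∑ q ∈ (Ti i).erase p, τ i q
              + ∑ q ∈ (Ti i)ᶜ, ε i q + σ2)
            ≤ ‖⟪h i p, w p i⟫‖ ^ 2) ∧
       -- (R2)
       (∀ q : T, ∀ i ∈ Up q,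
          ∑ j ∈ (Up q).erase i, ‖⟪h i q, w q j⟫‖ ^ 2 ≤ τ i q) ∧
       -- (R3)
       (∀ q : T, ∀ i ∉ Up q,
          ∑ j ∈ Up q, ‖⟪h i q, w q j⟫‖ ^ 2 ≤ ε i q)))
    -- the total transmit power
    (obj : (T → U → EuclideanSpace ℂ (Fin N)) → ℝ)
    (hobj : ∀ w, obj w = ∑ p : T, ∑ i ∈ Up p, ‖w p i‖ ^ 2) :
    (∀ w, (FeasP w ↔ ∃ τ ε, FeasR w τ ε) ∧ ∀ τ ε, FeasR w τ ε → FeasP w) ∧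
    sInf {x : ℝ | ∃ w, FeasP w ∧ obj w = x}
      = sInf {x : ℝ | ∃ w τ ε, FeasR w τ ε ∧ obj w = x} :=
  stmt0_general Up N h γ hγ σ2 hσ Ti hTi Γ hΓ FeasP hFeasP FeasR hFeasR obj
end

section
/- Fix p ∈ 𝒯 and i ∈ 𝒰_p. Suppose there exist nonnegative reals α_{jp} (j ∈ 𝒰_p∖{i}), β_{jp} (j ∈ 𝒰∖𝒰_p), and λ_{jp} (j ∈ 𝒰_p∖{i}) such that the KKT stationarity equation (I_{N_T} + Σ_{j∈𝒰_p∖{i}} α_{jp} h_{jp} h_{jp}ᴴ + Σ_{j∈𝒰∖𝒰_p} β_{jp} h_{jp} h_{jp}ᴴ + Σ_{j∈𝒰_p∖{i}} (λ_{jp}/N_T) h_{jp} h_{jp}ᴴ) w_{ip} = 0 holds. Then w_{ip} = 0 (the coefficient matrix is Hermitian positive definite), and consequently, since γ_{ip} > 0 and σ² > 0, the SINR constraint |h_{ip}ᴴ w_{ip}|² ≥ γ_{ip}(Σ_{j∈𝒰_p∖{i}} |h_{ip}ᴴ w_{jp}|² + Σ_{q∈𝒯_i∖{p}} τ_{iq}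 + Σ_{q∈𝒯∖𝒯_i} ε_{iq} + σ²) is violated for any nonnegative τ, ε. Hence at any feasible KKT point of the relaxed problem the multiplier λ_{ip} of each SINR constraint must be strictly positive. -/
open Matrix
open scoped ComplexOrder

theorem Matrix.posSemidef_sum_smul_vecMulVec_self_star {ι n R : Type*} [Fintype n]
    [CommRing R] [PartialOrder R] [StarRing R] [StarOrderedRing R]
    (s : Finset ι) (a : ι → R) (v : ι → n → R) (ha : ∀ j ∈ s, 0 ≤ a j) :
    (∑ j ∈ s, a j • vecMulVec (v j) (star (v j))).PosSemidef :=
  posSemidef_sum s fun j hj => (posSemidef_vecMulVec_self_star (v j)).smul (ha j hj)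

theorem Matrix.PosDef.eq_zero_of_mulVec_eq_zero {n K : Type*} [Fintype n] [DecidableEq n]
    [Field K] [PartialOrder K] [StarRing K] {M : Matrix n n K} (hM : M.PosDef) {x : n → K}
    (hx : M *ᵥ x = 0) : x = 0 :=
  mulVec_injective_of_isUnit hM.isUnit (hx.trans (mulVec_zero M).symm)

theorem stmt3_general
    {T U : Type*} [Fintype T] [Fintype U] [DecidableEq T] [DecidableEq U]
    (Up : T → Finset U)
    (N : ℕ)
    (h : U → T → (Fin N → ℂ))
    (γ : U → T → ℝ) (σ2 : ℝ)
    (Ti : U → Finset T)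
    (p : T) (i : U)
    (hγip : 0 < γ i p) (hσ : 0 < σ2)
    (α : U → ℝ) (hα : ∀ j ∈ (Up p).erase i, 0 ≤ α j)
    (β : U → ℝ) (hβ : ∀ j ∉ Up p, 0 ≤ β j)
    (lam : U → ℝ) (hlam : ∀ j ∈ (Up p).erase i, 0 ≤ lam j)
    (w : T → U → (Fin N → ℂ))
    -- the KKT coefficient matrix
    (K : Matrix (Fin N) (Fin N) ℂ)
    (hK : K = (1 : Matrix (Fin N) (Fin N) ℂ)
        + ∑ j ∈ (Up p).erase i, ((α j : ℝ) : ℂ) • vecMulVec (h j p) (star (h j p))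
        + ∑ j ∈ (Up p)ᶜ, ((β j : ℝ) : ℂ) • vecMulVec (h j p) (star (h j p))
        + ∑ j ∈ (Up p).erase i, ((lam j / N : ℝ) : ℂ) • vecMulVec (h j p) (star (h j p)))
    -- the KKT stationarity equation
    (hstat : K *ᵥ w p i = 0) :
    K.PosDef ∧ w p i = 0 ∧
    ∀ τ ε : T → ℝ, (∀ q, 0 ≤ τ q) → (∀ q, 0 ≤ ε q) →
      ¬ (γ i p * (∑ j ∈ (Up p).erase i, ‖star (h i p) ⬝ᵥ w p j‖ ^ 2
            + ∑ q ∈ (Ti i).erase p, τ q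
            + ∑ q ∈ (Ti i)ᶜ, ε q + σ2)
          ≤ ‖star (h i p) ⬝ᵥ w p i‖ ^ 2) := by
  have hKpd : K.PosDef := by
    subst hK
    refine ((PosDef.one.add_posSemidef ?_).add_posSemidef ?_).add_posSemidef ?_ <;>
      refine posSemidef_sum_smul_vecMulVec_self_star _ _ _ fun j hj => Complex.zero_le_real.mpr ?_
    · exact hα j hj
    · exact hβ j (Finset.mem_compl.mp hj)
    · exact div_nonneg (hlam j hj) N.cast_nonneg
  have hw : w p i = 0 := hKpd.eq_zero_of_mulVec_eq_zero hstat
  refine ⟨hKpd, hw, fun τ ε hτ hε hSINR => ?_⟩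
  rw [hw, dotProduct_zero, norm_zero, zero_pow two_ne_zero] at hSINR
  have hinterf : 0 ≤ ∑ j ∈ (Up p).erase i, ‖star (h i p) ⬝ᵥ w p j‖ ^ 2
      + ∑ q ∈ (Ti i).erase p, τ q + ∑ q ∈ (Ti i)ᶜ, ε q := by
    have := Finset.sum_nonneg fun q (_ : q ∈ (Ti i).erase p) => hτ q
    have := Finset.sum_nonneg fun q (_ : q ∈ (Ti i)ᶜ) => hε q
    positivity
  exact hSINR.not_gt (mul_pos hγip (by linarith))

/-- If the KKT stationarity equation with multiplier `λ_{ip} = 0`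
holds at `(p, i)`, then (the coefficient matrix being Hermitian positive definite)
`w_{ip} = 0`, and hence the SINR constraint of the relaxed problem is violated for
all nonnegative interference bounds `τ, ε`; so at any feasible KKT point the
multiplier of each SINR constraint must be strictly positive. -/
theorem stmt3
    {T U : Type*} [Fintype T] [Fintype U] [DecidableEq T] [DecidableEq U]
    (Up : T → Finset U)
    (hserve : ∀ i : U, ∃ p : T, i ∈ Up p)
    (N : ℕ) (hN : 1 ≤ N)
    (h : U → T → (Fin N → ℂ))
    (γ : U → T → ℝ) (σ2 : ℝ)
    (Ti : U → Finset T) (hTi : ∀ i p, p ∈ Ti i ↔ i ∈ Up p)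
    (p : T) (i : U) (hi : i ∈ Up p)
    (hγip : 0 < γ i p) (hσ : 0 < σ2)
    (α : U → ℝ) (hα : ∀ j ∈ (Up p).erase i, 0 ≤ α j)
    (β : U → ℝ) (hβ : ∀ j ∉ Up p, 0 ≤ β j)
    (lam : U → ℝ) (hlam : ∀ j ∈ (Up p).erase i, 0 ≤ lam j)
    (w : T → U → (Fin N → ℂ))
    -- the KKT coefficient matrix
    (K : Matrix (Fin N) (Fin N) ℂ)
    (hK : K = (1 : Matrix (Fin N) (Fin N) ℂ)
        + ∑ j ∈ (Up p).erase i, ((α j : ℝ) : ℂ) • vecMulVec (h j p) (star (h j p))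
        + ∑ j ∈ (Up p)ᶜ, ((β j : ℝ) : ℂ) • vecMulVec (h j p) (star (h j p))
        + ∑ j ∈ (Up p).erase i, ((lam j / N : ℝ) : ℂ) • vecMulVec (h j p) (star (h j p)))
    -- the KKT stationarity equation
    (hstat : K *ᵥ w p i = 0) :
    K.PosDef ∧ w p i = 0 ∧
    ∀ τ ε : T → ℝ, (∀ q, 0 ≤ τ q) → (∀ q, 0 ≤ ε q) →
      ¬ (γ i p * (∑ j ∈ (Up p).erase i, ‖star (h i p) ⬝ᵥ w p j‖ ^ 2
            + ∑ q ∈ (Ti i).erase p, τ q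
            + ∑ q ∈ (Ti i)ᶜ, ε q + σ2)
          ≤ ‖star (h i p) ⬝ᵥ w p i‖ ^ 2) :=
  stmt3_general Up N h γ σ2 Ti p i hγip hσ α hα β hβ lam hlam w K hK hstat
end

section
/- Closed-form ADMM A-update: let J be a finite index set with a distinguished element i, let c : J → ℂ with Σ_{k∈J∖{i}} |c_k|² > 0, let τ > 0, s ∈ ℂ with s ≠ 0, γ > 0, and κ ∈ ℝ. Consider minimizing Σ_{j∈J} |A_j − c_j|² over A : J → ℂ subject to the two equality constraints Σ_{j∈J∖{i}} |A_j|² = τ and γ·(τ + κ) + |s|² − 2·Re(s·A_i) = 0. The unique minimizer is given by A*_j = √τ·c_j / √(Σ_{k∈J∖{i}} |c_k|²) for j ≠ i, and A*_i = c_i + ζ·conj(s) with ζ = (γ(τ + κ) + |s|² − 2·Re(s·c_i)) / (2|s|²). (In the ADMM A-update of the decentralized CJT precoding algorithm, s = (w_{ip,c}^{(l)})ᴴ h_{ip}, c_j = h_{ip}ᴴ w_{jp}^{(l,m)} − λ_{i,j}^{(l,m)}, and κ = Σ_{q∈𝒯_i∖{p}} τ_{iq} + Σ_{q∈𝒯∖𝒯_i}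 ε_{iq} + σ².) -/
set_option maxHeartbeats 1000000 in
/-- Closed-form ADMM A-update: minimizing `Σ_j |A_j − c_j|²`
subject to `Σ_{j≠i} |A_j|² = τ` and `γ(τ + κ) + |s|² − 2·Re(s·A_i) = 0` has the
unique minimizer `A*_j = √τ·c_j/√(Σ_{k≠i}|c_k|²)` for `j ≠ i` and
`A*_i = c_i + ζ·conj(s)` with `ζ = (γ(τ+κ) + |s|² − 2·Re(s·c_i))/(2|s|²)`. -/
theorem stmt11
    {J : Type*} [Fintype J] [DecidableEq J] (i : J)
    (c : J → ℂ) (hc : 0 < ∑ k ∈ Finset.univ.erase i, ‖c k‖ ^ 2)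
    (τ : ℝ) (hτ : 0 < τ)
    (s : ℂ) (hs : s ≠ 0)
    (γ : ℝ) (hγ : 0 < γ) (κ : ℝ)
    (ζ : ℝ)
    (hζ : ζ = (γ * (τ + κ) + ‖s‖ ^ 2 - 2 * (s * c i).re)
                / (2 * ‖s‖ ^ 2))
    (Astar : J → ℂ)
    (hAstar : Astar = fun j =>
      if j = i then c i + (ζ : ℂ) * (starRingEnd ℂ s)
      else ((Real.sqrt τ : ℝ) : ℂ) * c j
        / ((Real.sqrt (∑ k ∈ Finset.univ.erase i, ‖c k‖ ^ 2) : ℝ) : ℂ)) :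
    -- `A*` is feasible
    (∑ j ∈ Finset.univ.erase i, ‖Astar j‖ ^ 2 = τ) ∧
    (γ * (τ + κ) + ‖s‖ ^ 2 - 2 * (s * Astar i).re = 0) ∧
    -- `A*` minimizes the objective over the feasible set
    (∀ A : J → ℂ,
        (∑ j ∈ Finset.univ.erase i, ‖A j‖ ^ 2 = τ) →
        (γ * (τ + κ) + ‖s‖ ^ 2 - 2 * (s * A i).re = 0) →
        ∑ j, ‖Astar j - c j‖ ^ 2 ≤ ∑ j, ‖A j - c j‖ ^ 2) ∧
    -- and it is the unique minimizer
    (∀ A : J → ℂ,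
        (∑ j ∈ Finset.univ.erase i, ‖A j‖ ^ 2 = τ) →
        (γ * (τ + κ) + ‖s‖ ^ 2 - 2 * (s * A i).re = 0) →
        ∑ j, ‖A j - c j‖ ^ 2 = ∑ j, ‖Astar j - c j‖ ^ 2 →
        A = Astar) := by
  classical
  set e : Finset J := Finset.univ.erase i with he
  set S : ℝ := ∑ k ∈ e, ‖c k‖ ^ 2 with hSdef
  have hSpos : 0 < S := hc
  set t : ℝ := Real.sqrt τ / Real.sqrt S with ht
  have htpos : 0 < t := div_pos (Real.sqrt_pos.mpr hτ) (Real.sqrt_pos.mpr hSpos)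
  have ht2 : t ^ 2 * S = τ := by
    rw [ht, div_pow, Real.sq_sqrt hτ.le, Real.sq_sqrt hSpos.le]
    field_simp
  have hsabs : (0:ℝ) < ‖s‖ ^ 2 :=
    pow_pos (norm_pos_iff.mpr hs) 2
  have hs0 : (2:ℝ) * ‖s‖ ^ 2 ≠ 0 := by positivity
  -- values of Astar
  have hAi : Astar i = c i + (ζ : ℂ) * (starRingEnd ℂ s) := by rw [hAstar]; simp
  have hAne : ∀ j ∈ e, Astar j = (t : ℂ) * c j := by
    intro j hj
    have hji : j ≠ i := Finset.ne_of_mem_erase hj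
    rw [hAstar]
    simp only [if_neg hji]
    rw [ht]
    push_cast
    ring
  clear_value t
  clear ht
  have htne : t ≠ 0 := ne_of_gt htpos
  -- feasibility 1
  have feas1 : ∑ j ∈ e, ‖Astar j‖ ^ 2 = τ := by
    have h : ∀ j ∈ e, ‖Astar j‖ ^ 2 = t ^ 2 * ‖c j‖ ^ 2 := by
      intro j hj
      rw [hAne j hj, norm_mul, Complex.norm_real, Real.norm_eq_abs, mul_pow, sq_abs]
    rw [Finset.sum_congr rfl h, ← Finset.mul_sum, ← hSdef, ht2]
  -- feasibility 2
  have hζ' : ζ * (2 * ‖s‖ ^ 2)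
      = γ * (τ + κ) + ‖s‖ ^ 2 - 2 * (s * c i).re := by
    rw [hζ]; exact div_mul_cancel₀ _ hs0
  have hreAi : (s * Astar i).re = (s * c i).re + ζ * ‖s‖ ^ 2 := by
    rw [hAi]
    have h1 : s * (c i + (ζ:ℂ) * (starRingEnd ℂ s))
        = s * c i + ((ζ * Complex.normSq s : ℝ) : ℂ) := by
      rw [show ((ζ * Complex.normSq s : ℝ) : ℂ) = (ζ:ℂ) * ((Complex.normSq s : ℝ):ℂ) by push_cast; ring,
        ← Complex.mul_conj]
      ring
    rw [h1, Complex.add_re, Complex.ofReal_re, Complex.normSq_eq_norm_sq]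
  have feas2 : γ * (τ + κ) + ‖s‖ ^ 2 - 2 * (s * Astar i).re = 0 := by
    rw [hreAi]
    linarith [hζ']
  -- the key decomposition
  have key : ∀ A : J → ℂ,
      (∑ j ∈ e, ‖A j‖ ^ 2 = τ) →
      (γ * (τ + κ) + ‖s‖ ^ 2 - 2 * (s * A i).re = 0) →
      ∑ j, ‖A j - c j‖ ^ 2 = ∑ j, ‖Astar j - c j‖ ^ 2
        + Complex.normSq (A i - Astar i)
        + (1 / t) * ∑ j ∈ e, Complex.normSq (A j - Astar j) := by
    intro A hA1 hA2
    -- head identity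
    have hre : (s * (A i - c i)).re = ζ * ‖s‖ ^ 2 := by
      have h1 : (s * (A i - c i)).re = (s * A i).re - (s * c i).re := by
        rw [mul_sub, Complex.sub_re]
      rw [h1]
      linarith [hζ', hA2]
    have head : Complex.normSq (A i - c i)
        = Complex.normSq (Astar i - c i) + Complex.normSq (A i - Astar i) := by
      rw [hAi]
      have habs : ‖s‖ ^ 2 = s.re ^ 2 + s.im ^ 2 := by
        rw [Complex.sq_norm, Complex.normSq_apply]; ring
      rw [habs] at hre
      simp only [Complex.normSq_apply, Complex.sub_re, Complex.sub_im, Complex.add_re,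
        Complex.add_im, Complex.mul_re, Complex.mul_im, Complex.ofReal_re, Complex.ofReal_im,
        Complex.conj_re, Complex.conj_im] at hre ⊢
      linear_combination 2 * ζ * hre
    -- tail identities
    have tailA : ∀ j ∈ e, Complex.normSq (A j - c j)
        = Complex.normSq (A j) + Complex.normSq (c j) - 2 * (A j * starRingEnd ℂ (c j)).re := by
      intro j _; exact Complex.normSq_sub _ _
    have tailStar : ∀ j ∈ e, Complex.normSq (Astar j - c j)
        = (t - 1) ^ 2 * Complex.normSq (c j) := by
      intro j hj
      rw [hAne j hj, show (t:ℂ) * c j - c j = ((t - 1 : ℝ):ℂ) * c j by push_cast; ring,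
        Complex.normSq_mul, Complex.normSq_ofReal]
      ring
    have tailDiff : ∀ j ∈ e, Complex.normSq (A j - Astar j)
        = Complex.normSq (A j) + t ^ 2 * Complex.normSq (c j)
          - 2 * t * (A j * starRingEnd ℂ (c j)).re := by
      intro j hj
      rw [hAne j hj, Complex.normSq_sub, Complex.normSq_mul, Complex.normSq_ofReal,
        map_mul, Complex.conj_ofReal,
        show A j * (((t:ℝ):ℂ) * starRingEnd ℂ (c j)) = ((t:ℝ):ℂ) * (A j * starRingEnd ℂ (c j)) by ring,
        Complex.re_ofReal_mul]
      ring
    -- sums over e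
    have hA1' : ∑ j ∈ e, Complex.normSq (A j) = τ := by
      rw [← hA1]; exact Finset.sum_congr rfl fun j _ => (Complex.sq_norm _).symm
    have hS' : ∑ j ∈ e, Complex.normSq (c j) = S := by
      rw [hSdef]; exact Finset.sum_congr rfl fun j _ => (Complex.sq_norm _).symm
    set R : ℝ := ∑ j ∈ e, (A j * starRingEnd ℂ (c j)).re with hR
    have sum1 : ∑ j ∈ e, Complex.normSq (A j - c j) = τ + S - 2 * R := by
      rw [Finset.sum_congr rfl tailA, Finset.sum_sub_distrib, Finset.sum_add_distrib,
        hA1', hS', ← Finset.mul_sum, ← hR]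
    have sum2 : ∑ j ∈ e, Complex.normSq (Astar j - c j) = (t - 1) ^ 2 * S := by
      rw [Finset.sum_congr rfl tailStar, ← Finset.mul_sum, hS']
    have sum3 : ∑ j ∈ e, Complex.normSq (A j - Astar j) = τ + t ^ 2 * S - 2 * t * R := by
      rw [Finset.sum_congr rfl tailDiff, Finset.sum_sub_distrib, Finset.sum_add_distrib,
        hA1', ← Finset.mul_sum, hS', ← Finset.mul_sum, ← hR]
    -- whole sums
    have split : ∀ B : J → ℂ, ∑ j, ‖B j - c j‖ ^ 2
        = ∑ j ∈ e, Complex.normSq (B j - c j) + Complex.normSq (B i - c i) := by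
      intro B
      rw [show (∑ j, ‖B j - c j‖ ^ 2) = ∑ j, Complex.normSq (B j - c j) from
        Finset.sum_congr rfl fun j _ => Complex.sq_norm _]
      exact (Finset.sum_erase_add Finset.univ _ (Finset.mem_univ i)).symm
    have hinv : (1 / t) * (τ + t ^ 2 * S - 2 * t * R) = τ + S - 2 * R - (t - 1) ^ 2 * S := by
      field_simp
      linear_combination (t - 1) * ht2
    rw [split A, split Astar, sum1, sum2, sum3, head, hinv]
    ring
  -- nonnegativity of the correction terms
  have nn : ∀ A : J → ℂ, 0 ≤ Complex.normSq (A i - Astar i)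
        + (1 / t) * ∑ j ∈ e, Complex.normSq (A j - Astar j) := by
    intro A
    have h1 : (0:ℝ) ≤ ∑ j ∈ e, Complex.normSq (A j - Astar j) :=
      Finset.sum_nonneg fun j _ => Complex.normSq_nonneg _
    exact add_nonneg (Complex.normSq_nonneg _)
      (mul_nonneg (le_of_lt (one_div_pos.mpr htpos)) h1)
  refine ⟨feas1, feas2, ?_, ?_⟩
  · intro A hA1 hA2
    have hk := key A hA1 hA2
    linarith [nn A]
  · intro A hA1 hA2 heq
    have hk := key A hA1 hA2
    rw [heq] at hk
    have h1 : (0:ℝ) ≤ ∑ j ∈ e, Complex.normSq (A j - Astar j) :=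
      Finset.sum_nonneg fun j _ => Complex.normSq_nonneg _
    have h2 := Complex.normSq_nonneg (A i - Astar i)
    have hti : 0 < 1 / t := one_div_pos.mpr htpos
    have hsum0 : ∑ j ∈ e, Complex.normSq (A j - Astar j) = 0 := by nlinarith
    have hi0 : Complex.normSq (A i - Astar i) = 0 := by nlinarith
    funext j
    by_cases hj : j = i
    · subst hj
      exact sub_eq_zero.mp (Complex.normSq_eq_zero.mp hi0)
    · have hjmem : j ∈ e := Finset.mem_erase.mpr ⟨hj, Finset.mem_univ j⟩
      have h3 := (Finset.sum_eq_zero_iff_of_nonneg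
        fun k _ => Complex.normSq_nonneg (A k - Astar k)).mp hsum0 j hjmem
      exact sub_eq_zero.mp (Complex.normSq_eq_zero.mp h3)
end
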